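/- Let R be a 2×2 unitary matrix with det R = 1 and let U be a 2×2 unitary matrix with det U = ω^k for some integer k, where ω = e^{iπ/4}. If there exists a unit scalar λ with ‖R − λU‖ ≤ ε, then there exists an integer n such that ‖R − e^{inπ/8} U‖ ≤ ε. -/

import Mathlib

/-!
With `W = R⋆U`, the C⋆-identity gives `‖R - γU‖² = ‖2 - (γW + (γW)⋆)‖` for every unit `γ`, and
comparing with the trace shows that this is at least `2 - |tr W|`. Since `det W = ω^k`, some
`γ = ± e^{-ikπ/8}` puts `γW` in `SU(2)`, where Cayley–Hamilton gives `γW + (γW)⋆ = tr(γW) • 1` with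
`tr(γW)` real. Choosing the sign so that `tr(γW) ≥ 0` yields `‖R - γU‖² = 2 - |tr W|`, so this
sixteenth root of unity is an optimal phase.
-/

noncomputable def ω : ℂ := (1 + Complex.I) / (Real.sqrt 2 : ℂ)

open Complex
open scoped Real ComplexConjugate

lemma ω_eq_exp_sq : ω = exp (π * I / 8) ^ 2 := by
  rw [← exp_nat_mul, ω, show ((2 : ℕ) : ℂ) * (π * I / 8) = (π / 4 : ℝ) * I by push_cast; ring,
    exp_mul_I, ← ofReal_cos, ← ofReal_sin, Real.cos_pi_div_four, Real.sin_pi_div_four]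
  have hsqrt : (√2 : ℂ) ^ 2 = 2 := by norm_cast; exact Real.sq_sqrt zero_le_two
  have hsqrt0 : (√2 : ℂ) ≠ 0 := by norm_cast; positivity
  field_simp
  push_cast
  linear_combination (-(1 + I) / 2) * hsqrt

lemma exp_pi_mul_I_div_eight_pow_eight : exp (π * I / 8) ^ 8 = -1 := by
  rw [← exp_nat_mul, ← exp_pi_mul_I]
  congr 1
  push_cast
  ring

lemma exp_int_mul_pi_mul_I_div_eight (n : ℤ) : exp (n * π * I / 8) = exp (π * I / 8) ^ n := by
  rw [← exp_int_mul]
  congr 1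
  ring

lemma norm_exp_int_mul_pi_mul_I_div_eight (n : ℤ) : ‖exp (n * π * I / 8)‖ = 1 := by
  rw [show (n * π * I / 8 : ℂ) = (n * π / 8 : ℝ) * I by push_cast; ring, norm_exp_ofReal_mul_I]

lemma Complex.mem_unitary_of_norm_eq_one {γ : ℂ} (hγ : ‖γ‖ = 1) : γ ∈ unitary ℂ := by
  rw [Unitary.mem_iff, star_def, conj_mul', mul_conj', hγ]
  norm_num

section StarAlgebra

variable {A : Type*} [Ring A] [StarRing A] [Algebra ℂ A] [StarModule ℂ A]

lemma star_sub_smul_mul_sub_smul {R U : A} (hR : R ∈ unitary A) (hU : U ∈ unitary A)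
    {γ : ℂ} (hγ : ‖γ‖ = 1) :
    star (R - γ • U) * (R - γ • U) = 2 - (γ • (star R * U) + star (γ • (star R * U))) := by
  have hγγ : γ * conj γ = 1 := Unitary.mul_star_self_of_mem (mem_unitary_of_norm_eq_one hγ)
  simp only [star_sub, star_smul, star_mul, star_star, sub_mul, mul_sub, smul_mul_assoc,
    mul_smul_comm, smul_sub, smul_smul, Unitary.star_mul_self_of_mem hR,
    Unitary.star_mul_self_of_mem hU, star_def, hγγ, one_smul, ← one_add_one_eq_two]
  abel

end StarAlgebra

lemma CStarRing.sq_norm_sub_smul {A : Type*} [NormedRing A] [StarRing A] [CStarRing A]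
    [NormedAlgebra ℂ A] [StarModule ℂ A] {R U : A} (hR : R ∈ unitary A) (hU : U ∈ unitary A)
    {γ : ℂ} (hγ : ‖γ‖ = 1) :
    ‖R - γ • U‖ ^ 2 = ‖2 - (γ • (star R * U) + star (γ • (star R * U)))‖ := by
  rw [← star_sub_smul_mul_sub_smul hR hU hγ, CStarRing.norm_star_mul_self, sq]

namespace Matrix

section SpecialUnitary

variable {α : Type*} [CommRing α] [StarRing α] {V : Matrix (Fin 2) (Fin 2) α}

lemma add_star_eq_trace_smul_one (hV : V ∈ specialUnitaryGroup (Fin 2) α) :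
    V + star V = V.trace • 1 := by
  rw [mem_specialUnitaryGroup_iff] at hV
  have hstar : star V = V.adjugate := by
    rw [← one_mul V.adjugate, ← Unitary.star_mul_self_of_mem hV.1, mul_assoc, mul_adjugate,
      hV.2, one_smul, mul_one]
  rw [hstar, adjugate_fin_two]
  ext i j
  fin_cases i <;> fin_cases j <;> simp [trace_fin_two, add_comm]

lemma star_trace_eq_self (hV : V ∈ specialUnitaryGroup (Fin 2) α) :
    star V.trace = V.trace := by
  have h := congrArg trace (add_star_eq_trace_smul_one hV)
  rw [trace_add, star_eq_conjTranspose, trace_conjTranspose, trace_smul, trace_one,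
    Fintype.card_fin, smul_eq_mul] at h
  linear_combination h

end SpecialUnitary

lemma exists_exp_smul_mem_specialUnitaryGroup_and_re_trace_nonneg {W : Matrix (Fin 2) (Fin 2) ℂ}
    (hW : W ∈ unitaryGroup (Fin 2) ℂ) {k : ℤ} (hdet : W.det = ω ^ k) :
    ∃ n : ℤ, exp (n * π * I / 8) • W ∈ specialUnitaryGroup (Fin 2) ℂ ∧
      0 ≤ (exp (n * π * I / 8) • W).trace.re := by
  have hmem : ∀ γ : ℂ, ‖γ‖ = 1 → γ ^ 2 * ω ^ k = 1 → γ • W ∈ specialUnitaryGroup (Fin 2) ℂ :=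
    fun γ hγ hγ2 => mem_specialUnitaryGroup_iff.mpr
      ⟨Unitary.smul_mem_of_mem (mem_unitary_of_norm_eq_one hγ) hW,
        by rw [det_smul, Fintype.card_fin, hdet, hγ2]⟩
  have hnorm : ‖exp (π * I / 8) ^ (-k)‖ = 1 := by
    rw [← exp_int_mul_pi_mul_I_div_eight, norm_exp_int_mul_pi_mul_I_div_eight]
  simp only [exp_int_mul_pi_mul_I_div_eight]
  rw [ω_eq_exp_sq] at hmem
  set ζ := exp (π * I / 8)
  have hζ0 : ζ ≠ 0 := exp_ne_zero _
  have hroot : (ζ ^ (-k)) ^ 2 * (ζ ^ 2) ^ k = 1 := by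
    rw [← zpow_natCast, ← zpow_natCast, zpow_comm,
      _root_.zpow_neg_mul_zpow_self _ (zpow_ne_zero _ hζ0)]
  have hflip : ζ ^ (-k + 8) = -ζ ^ (-k) := by
    rw [zpow_add₀ hζ0, zpow_ofNat, exp_pi_mul_I_div_eight_pow_eight, mul_neg_one]
  by_cases hre : 0 ≤ (ζ ^ (-k) • W).trace.re
  · exact ⟨-k, hmem _ hnorm hroot, hre⟩
  · refine ⟨-k + 8, ?_, ?_⟩ <;> rw [hflip]
    · exact hmem _ (by rw [norm_neg, hnorm]) (by rw [neg_sq, hroot])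
    · rw [neg_smul, trace_neg, neg_re]
      linarith

section L2OpNorm

open scoped Matrix.Norms.L2Operator

section RCLike

variable {𝕜 m n : Type*} [RCLike 𝕜] [Fintype m] [Fintype n] [DecidableEq n]

lemma norm_entry_le_l2_opNorm (A : Matrix m n 𝕜) (i : m) (j : n) : ‖A i j‖ ≤ ‖A‖ := by
  set e := EuclideanSpace.single j (1 : 𝕜)
  calc ‖A i j‖ = ‖(EuclideanSpace.equiv m 𝕜).symm (A *ᵥ e) i‖ := by
        simp [e, mulVec_single]
    _ ≤ ‖(EuclideanSpace.equiv m 𝕜).symm (A *ᵥ e)‖ := PiLp.norm_apply_le _ i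
    _ ≤ ‖A‖ * ‖e‖ := l2_opNorm_mulVec A e
    _ = ‖A‖ := by simp [e]

lemma norm_trace_le_card_mul_l2_opNorm (A : Matrix n n 𝕜) :
    ‖A.trace‖ ≤ Fintype.card n * ‖A‖ :=
  calc ‖A.trace‖ ≤ ∑ i, ‖A i i‖ := norm_sum_le _ _
    _ ≤ ∑ _i : n, ‖A‖ := Finset.sum_le_sum fun i _ => norm_entry_le_l2_opNorm A i i
    _ = Fintype.card n * ‖A‖ := by simp

end RCLike

variable {R U : Matrix (Fin 2) (Fin 2) ℂ}

lemma two_sub_norm_trace_le_sq_norm_sub_smul (hR : R ∈ unitaryGroup (Fin 2) ℂ)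
    (hU : U ∈ unitaryGroup (Fin 2) ℂ) {γ : ℂ} (hγ : ‖γ‖ = 1) :
    2 - ‖(star R * U).trace‖ ≤ ‖R - γ • U‖ ^ 2 := by
  set V := γ • (star R * U)
  have htrace : (2 - (V + star V)).trace = ((4 - 2 * (γ * (star R * U).trace).re : ℝ) : ℂ) := by
    rw [trace_sub, trace_add, star_eq_conjTranspose, trace_conjTranspose, star_def, add_conj,
      trace_smul, smul_eq_mul]
    norm_num [trace_fin_two, ofNat_apply]
  rw [CStarRing.sq_norm_sub_smul hR hU hγ]
  calc 2 - ‖(star R * U).trace‖ ≤ 2 - (γ * (star R * U).trace).re := by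
        have := re_le_norm (γ * (star R * U).trace)
        rw [norm_mul, hγ, one_mul] at this
        linarith
    _ = ((2 - (V + star V)).trace).re / 2 := by rw [htrace, ofReal_re]; ring
    _ ≤ ‖(2 - (V + star V)).trace‖ / 2 := by gcongr; exact re_le_norm _
    _ ≤ ‖2 - (V + star V)‖ := by
        have := norm_trace_le_card_mul_l2_opNorm (2 - (V + star V))
        rw [Fintype.card_fin] at this
        push_cast at this
        linarith

lemma sq_norm_sub_smul_eq_two_sub_norm_trace (hR : R ∈ unitaryGroup (Fin 2) ℂ)
    (hU : U ∈ unitaryGroup (Fin 2) ℂ) {γ : ℂ} (hγ : ‖γ‖ = 1)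
    (hSU : γ • (star R * U) ∈ specialUnitaryGroup (Fin 2) ℂ)
    (hre : 0 ≤ (γ • (star R * U)).trace.re) :
    ‖R - γ • U‖ ^ 2 = 2 - ‖(star R * U).trace‖ := by
  set s := (star R * U).trace
  have htrace : (γ • (star R * U)).trace = ‖s‖ := by
    have hreal : ((γ • (star R * U)).trace.re : ℂ) = (γ • (star R * U)).trace :=
      conj_eq_iff_re.mp (star_trace_eq_self hSU)
    rw [← hreal, ← Complex.norm_of_nonneg hre, hreal, trace_smul, smul_eq_mul, norm_mul, hγ,
      one_mul]
  have hs : ‖s‖ ≤ 2 := by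
    have := norm_trace_le_card_mul_l2_opNorm (star R * U)
    rwa [CStarRing.norm_of_mem_unitary (mul_mem (Unitary.star_mem hR) hU), Fintype.card_fin,
      Nat.cast_ofNat, mul_one] at this
  have hscalar : (2 : Matrix (Fin 2) (Fin 2) ℂ) - (‖s‖ : ℂ) • 1 = ((2 - ‖s‖ : ℝ) : ℂ) • 1 := by
    push_cast
    rw [sub_smul, two_smul, one_add_one_eq_two]
  rw [CStarRing.sq_norm_sub_smul hR hU hγ, add_star_eq_trace_smul_one hSU, htrace, hscalar,
    norm_smul, CStarRing.norm_one, mul_one, Complex.norm_of_nonneg (by linarith)]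

lemma norm_toEuclideanCLM_sub_smul_le (hR : R ∈ unitaryGroup (Fin 2) ℂ)
    (hU : U ∈ unitaryGroup (Fin 2) ℂ) {γ : ℂ} (hγ : ‖γ‖ = 1)
    (hSU : γ • (star R * U) ∈ specialUnitaryGroup (Fin 2) ℂ)
    (hre : 0 ≤ (γ • (star R * U)).trace.re) {μ : ℂ} (hμ : ‖μ‖ = 1) :
    ‖toEuclideanCLM (𝕜 := ℂ) (R - γ • U)‖ ≤ ‖toEuclideanCLM (𝕜 := ℂ) (R - μ • U)‖ := by
  rw [← cstar_norm_def, ← cstar_norm_def, ← pow_le_pow_iff_left₀ (norm_nonneg _) (norm_nonneg _)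
    two_ne_zero, sq_norm_sub_smul_eq_two_sub_norm_trace hR hU hγ hSU hre]
  exact two_sub_norm_trace_le_sq_norm_sub_smul hR hU hμ

end L2OpNorm

end Matrix

theorem discrete_phase_general (R U : Matrix (Fin 2) (Fin 2) ℂ)
    (hR : R ∈ Matrix.unitaryGroup (Fin 2) ℂ)
    (hU : U ∈ Matrix.unitaryGroup (Fin 2) ℂ)
    (hdetR : R.det = 1) (k : ℤ) (hdetU : U.det = ω ^ k)
    (ε : ℝ)
    (h : ∃ lam : ℂ, ‖lam‖ = 1 ∧
      ‖Matrix.toEuclideanCLM (𝕜 := ℂ) (R - lam • U)‖ ≤ ε) :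
    ∃ n : ℤ, ‖Matrix.toEuclideanCLM (𝕜 := ℂ)
        (R - Complex.exp (n * Real.pi * Complex.I / 8) • U)‖ ≤ ε := by
  obtain ⟨lam, hlam, hle⟩ := h
  have hdet : (star R * U).det = ω ^ k := by
    rw [Matrix.det_mul, Matrix.star_eq_conjTranspose, Matrix.det_conjTranspose, hdetR, star_one,
      one_mul, hdetU]
  obtain ⟨n, hSU, hre⟩ :=
    Matrix.exists_exp_smul_mem_specialUnitaryGroup_and_re_trace_nonneg
      (mul_mem (Unitary.star_mem hR) hU) hdet
  exact ⟨n, (Matrix.norm_toEuclideanCLM_sub_smul_le hR hU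
    (norm_exp_int_mul_pi_mul_I_div_eight n) hSU hre hlam).trans hle⟩

/-- If R is unitary with det R = 1 and U is unitary with det U = ω^k, and ‖R − λU‖ ≤ ε for
    some unit scalar λ, then ‖R − e^{inπ/8} U‖ ≤ ε for some integer n. -/
theorem discrete_phase (R U : Matrix (Fin 2) (Fin 2) ℂ)
    (hR : R ∈ Matrix.unitaryGroup (Fin 2) ℂ)
    (hU : U ∈ Matrix.unitaryGroup (Fin 2) ℂ)
    (hdetR : R.det = 1) (k : ℤ) (hdetU : U.det = ω ^ k)
    (ε : ℝ) (hε : 0 < ε)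
    (h : ∃ lam : ℂ, ‖lam‖ = 1 ∧
      ‖Matrix.toEuclideanCLM (𝕜 := ℂ) (R - lam • U)‖ ≤ ε) :
    ∃ n : ℤ, ‖Matrix.toEuclideanCLM (𝕜 := ℂ)
        (R - Complex.exp (n * Real.pi * Complex.I / 8) • U)‖ ≤ ε :=
  discrete_phase_general R U hR hU hdetR k hdetU ε h
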